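/- For terms α, β in the binary theta-term system with K_0(α) = K_0(β) = ∅, if α < β then α⁻ < β⁻, and (K_{i+1}(α))⁻ = K_i(α⁻), where α⁻ is obtained by replacing every occurrence of θ̄_i by θ̄_{i-1}. -/

import Mathlib

/-- Binary theta terms. -/
inductive BTerm : Type
  | zero : BTerm
  | th : ℕ → BTerm → BTerm → BTerm
  deriving DecidableEq

namespace BTerm

/-- `S 0 = -1`, `S (θ̄_i α β) = i`. -/
def S : BTerm → ℤ
  | zero => -1
  | th i _ _ => i

/-- The coefficient sets `K_j`. -/
def K (j : ℕ) : BTerm → Finset BTerm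
  | zero => ∅
  | th i a b => if j < i then K j a ∪ K j b else {th i a b}

/-- Membership in `T_n`. -/
inductive WF (n : ℕ) : BTerm → Prop
  | zero : WF n zero
  | th {i : ℕ} {a b : BTerm} : WF n a → WF n b → S a ≤ (i : ℤ) + 1 → S b ≤ (i : ℤ) →
      i < n → WF n (th i a b)

mutual
/-- The order on binary theta terms. -/
inductive Lt : BTerm → BTerm → Prop
  | zero {t : BTerm} : t ≠ zero → Lt zero t
  | idx {i j : ℕ} {a b c d : BTerm} : i < j → Lt (th i a b) (th j c d)
  | c1 {i : ℕ} {a b c d : BTerm} : Lt a c → (∀ x ∈ K i a, Lt x (th i c d)) →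
      Lt b (th i c d) → Lt (th i a b) (th i c d)
  | c2 {i : ℕ} {a b d : BTerm} : Lt b d → Lt (th i a b) (th i a d)
  | c3 {i : ℕ} {a b c d : BTerm} : Lt c a → (∀ x ∈ K i c, Le (th i a b) x) →
      Le (th i a b) d → Lt (th i a b) (th i c d)

inductive Le : BTerm → BTerm → Prop
  | refl {a : BTerm} : Le a a
  | of_lt {a b : BTerm} : Lt a b → Le a b
end

end BTerm

/-- Replace every `θ̄_i` by `θ̄_{i-1}`. -/
def BTerm.minus : BTerm → BTerm
  | BTerm.zero => BTerm.zero
  | BTerm.th i a b => BTerm.th (i - 1) (BTerm.minus a) (BTerm.minus b)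

/-!
`K 0 α = ∅` says exactly that no `θ̄_0` occurs in `α`, and this property passes to the subterms
and to the members of every `K j α`. On such terms `minus` lowers every index by one without
truncation, so it commutes with the coefficient sets (`K (i + 1)` becomes `K i`) and preserves
the index comparisons; each clause of the order is then transported along the mutual induction
defining `Lt` and `Le`.
-/

namespace BTerm

theorem minus_eq_zero_iff {t : BTerm} : minus t = zero ↔ t = zero := by
  cases t <;> simp [minus]

theorem K_zero_th_eq_empty_iff {i : ℕ} {a b : BTerm} :
    K 0 (th i a b) = ∅ ↔ 0 < i ∧ K 0 a = ∅ ∧ K 0 b = ∅ := by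
  by_cases hi : 0 < i <;> simp [K, hi]

theorem K_zero_eq_empty_of_mem_K {j : ℕ} {a x : BTerm} (ha : K 0 a = ∅) (hx : x ∈ K j a) :
    K 0 x = ∅ := by
  induction a with
  | zero => simp [K] at hx
  | th i a b iha ihb =>
    rw [K_zero_th_eq_empty_iff] at ha
    simp only [K] at hx
    split_ifs at hx
    · rcases Finset.mem_union.1 hx with hx | hx
      exacts [iha ha.2.1 hx, ihb ha.2.2 hx]
    · rw [Finset.mem_singleton.1 hx, K_zero_th_eq_empty_iff]
      exact ha

theorem image_minus_K_succ {a : BTerm} (ha : K 0 a = ∅) (i : ℕ) :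
    (K (i + 1) a).image minus = K i (minus a) := by
  induction a with
  | zero => simp [K, minus]
  | th j a b iha ihb =>
    rw [K_zero_th_eq_empty_iff] at ha
    simp only [K, minus]
    by_cases h : i + 1 < j
    · rw [if_pos h, if_pos (by omega), Finset.image_union, iha ha.2.1, ihb ha.2.2]
    · rw [if_neg h, if_neg (by omega)]
      simp [minus]

theorem forall_mem_K_pred_minus {i : ℕ} {c : BTerm} (hi : 0 < i) (hc : K 0 c = ∅)
    {p : BTerm → Prop} (h : ∀ y ∈ K i c, K 0 y = ∅ → p (minus y)) :
    ∀ x ∈ K (i - 1) (minus c), p x := by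
  rw [← image_minus_K_succ hc, Nat.sub_add_cancel hi]
  rintro _ hx
  obtain ⟨y, hy, rfl⟩ := Finset.mem_image.1 hx
  exact h y hy (K_zero_eq_empty_of_mem_K hc hy)

theorem minus_lt_minus {a b : BTerm} (h : Lt a b) (ha : K 0 a = ∅) (hb : K 0 b = ∅) :
    Lt (minus a) (minus b) := by
  induction h using Lt.rec
    (motive_2 := fun a b _ => K 0 a = ∅ → K 0 b = ∅ → Le (minus a) (minus b)) with
  | zero h => exact Lt.zero (minus_eq_zero_iff.not.2 h)
  | idx hij =>
    rw [K_zero_th_eq_empty_iff] at ha hb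
    exact Lt.idx (by omega)
  | c1 _ _ _ ih_ac ih_K ih_b =>
    obtain ⟨hi, ha₁, ha₂⟩ := K_zero_th_eq_empty_iff.1 ha
    obtain ⟨-, hc, -⟩ := K_zero_th_eq_empty_iff.1 hb
    exact Lt.c1 (ih_ac ha₁ hc)
      (forall_mem_K_pred_minus hi ha₁ fun y hy hy₀ => ih_K y hy hy₀ hb) (ih_b ha₂ hb)
  | c2 _ ih =>
    rw [K_zero_th_eq_empty_iff] at ha hb
    exact Lt.c2 (ih ha.2.2 hb.2.2)
  | c3 _ _ _ ih_ca ih_K ih_d =>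
    obtain ⟨-, ha₁, -⟩ := K_zero_th_eq_empty_iff.1 ha
    obtain ⟨hi, hc, hd⟩ := K_zero_th_eq_empty_iff.1 hb
    exact Lt.c3 (ih_ca hc ha₁)
      (forall_mem_K_pred_minus hi hc fun y hy hy₀ => ih_K y hy ha hy₀) (ih_d ha hd)
  | refl => exact Le.refl
  | of_lt _ ih =>
    rename_i ha hb
    exact Le.of_lt (ih ha hb)

end BTerm

/-- If `K₀(α) = K₀(β) = ∅` and `α < β`, then `α⁻ < β⁻`; moreover
`(K_{i+1}(α))⁻ = K_i(α⁻)`. -/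
theorem stmt18 (α β : BTerm) (hα : BTerm.K 0 α = ∅) (hβ : BTerm.K 0 β = ∅) :
    (BTerm.Lt α β → BTerm.Lt (BTerm.minus α) (BTerm.minus β)) ∧
    (∀ i : ℕ, (BTerm.K (i + 1) α).image BTerm.minus = BTerm.K i (BTerm.minus α)) :=
  ⟨fun h => BTerm.minus_lt_minus h hα hβ, BTerm.image_minus_K_succ hα⟩
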